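/- Let G be a graph and S⊆V(G) a set satisfying (H1) and (H2). Then for every edge e=ab of G[S], the set N_G(a)∩N_G(b)∩(V(G)∖S) induces a complete multipartite subgraph of G, and if B_e is nonempty then this induced subgraph is complete bipartite (complete multipartite with exactly two classes). -/

import Mathlib

namespace PrisonFreePaper

variable {V : Type*}

/-- The prison graph on 5 vertices: `K₅` minus the two edges `{4,2}` and `{4,3}`
(which share the vertex `4`).  Thus `{0,1,2,3}` is a 4-clique and the vertex `4`
is adjacent exactly to `0` and `1`. -/
def prison : SimpleGraph (Fin 5) where
  Adj a b := a ≠ b ∧ ¬((a = 4 ∧ (b = 2 ∨ b = 3)) ∨ (b = 4 ∧ (a = 2 ∨ a = 3)))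
  symm := by
    constructor
    rintro a b ⟨h1, h2⟩
    exact ⟨h1.symm, by tauto⟩
  loopless := by
    constructor
    rintro a ⟨h, _⟩
    exact h rfl

/-- `P` is a 5-vertex set inducing a subgraph of `G` isomorphic to the prison. -/
def InducesPrison (G : SimpleGraph V) (P : Set V) : Prop :=
  ∃ f : Fin 5 ↪ V, Set.range f = P ∧ ∀ a b, G.Adj (f a) (f b) ↔ prison.Adj a b

/-- `G` is prison-free: no 5-vertex set induces a prison. -/
def PrisonFree (G : SimpleGraph V) : Prop :=
  ¬ ∃ P : Set V, InducesPrison G P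

/-- `P` is the set of classes witnessing that the induced subgraph `G[F]` is
complete multipartite: the classes are nonempty, pairwise disjoint, their union
is `F`, and two vertices of `F` are adjacent iff they lie in different classes. -/
def IsCMP (G : SimpleGraph V) (F : Set V) (P : Set (Set V)) : Prop :=
  (∀ C ∈ P, C.Nonempty ∧ C ⊆ F) ∧
  (⋃₀ P = F) ∧
  (∀ C ∈ P, ∀ D ∈ P, C ≠ D → Disjoint C D) ∧
  (∀ u ∈ F, ∀ v ∈ F, (G.Adj u v ↔ ¬ ∃ C ∈ P, u ∈ C ∧ v ∈ C))

/-- The induced subgraph `G[F]` is complete multipartite. -/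
def CMP (G : SimpleGraph V) (F : Set V) : Prop := ∃ P, IsCMP G F P

/-- The induced subgraph `G[F]` is complete multipartite with at least `p` classes. -/
def CMPAtLeast (G : SimpleGraph V) (F : Set V) (p : ℕ) : Prop :=
  ∃ P, IsCMP G F P ∧ ∃ f : Fin p ↪ Set V, ∀ i, f i ∈ P

/-- `F ∈ cmd_p` of the induced subgraph of `G` on the ground set `W`:
`F` is an inclusion-wise maximal subset of `W` inducing a complete multipartite
graph with at least `p` classes. -/
def Cmd (G : SimpleGraph V) (W : Set V) (p : ℕ) (F : Set V) : Prop :=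
  F ⊆ W ∧ CMPAtLeast G F p ∧
    ∀ F', F' ⊆ W → F ⊆ F' → CMPAtLeast G F' p → F' = F

/-- The neighbourhood of `v` in `G` intersects at most one class of `P`. -/
def MeetsAtMostOneClass (G : SimpleGraph V) (P : Set (Set V)) (v : V) : Prop :=
  ∀ C ∈ P, ∀ D ∈ P, (∃ x ∈ C, G.Adj v x) → (∃ y ∈ D, G.Adj v y) → C = D

/-- The induced subgraph `G[X]`, viewed as a graph on the same vertex set
(only edges with both endpoints in `X` are kept). -/
def inducedOn (G : SimpleGraph V) (X : Set V) : SimpleGraph V where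
  Adj a b := G.Adj a b ∧ a ∈ X ∧ b ∈ X
  symm := by constructor; rintro a b ⟨h, ha, hb⟩; exact ⟨h.symm, hb, ha⟩
  loopless := by constructor; rintro a ⟨h, _⟩; exact G.irrefl h

/-- The set of edges of `G` with both endpoints in `X`, i.e. the edges of `G[X]`. -/
def edgesWithin (G : SimpleGraph V) (X : Set V) : Set (Sym2 V) :=
  (inducedOn G X).edgeSet

/-- `(G,k)` is a yes-instance of Prison-Free Edge Deletion. -/
def DeletionYes (G : SimpleGraph V) (k : ℕ) : Prop :=
  ∃ A : Set (Sym2 V), A ⊆ G.edgeSet ∧ A.Finite ∧ A.ncard ≤ k ∧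
    PrisonFree (G.deleteEdges A)

/-- `P` is a strict supergraph of a prison in `G`: a 5-vertex set whose induced
subgraph is `K₅` or `K₅` minus one edge (at most one non-adjacent pair). -/
def StrictSupPrison (G : SimpleGraph V) (P : Set V) : Prop :=
  P.ncard = 5 ∧ ∃ u v : V, ∀ x ∈ P, ∀ y ∈ P, x ≠ y → ¬ G.Adj x y →
    (x = u ∧ y = v) ∨ (x = v ∧ y = u)

/-- `P` is a supergraph of a prison in `G`: a 5-vertex set whose induced subgraph
contains a prison on `P` as a spanning subgraph, i.e. all non-adjacent pairs in `P`
are among two pairs sharing a common vertex. -/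
def SupPrison (G : SimpleGraph V) (P : Set V) : Prop :=
  P.ncard = 5 ∧ ∃ w u v : V, ∀ x ∈ P, ∀ y ∈ P, x ≠ y → ¬ G.Adj x y →
    (({x, y} : Set V) = {w, u} ∨ ({x, y} : Set V) = {w, v})

/-- Hypothesis (H1): every edge of `G` that does not have both endpoints in `S`
is contained in a strict supergraph of a prison in `G`. -/
def H1 (G : SimpleGraph V) (S : Set V) : Prop :=
  ∀ u v : V, G.Adj u v → ¬(u ∈ S ∧ v ∈ S) →
    ∃ P, StrictSupPrison G P ∧ u ∈ P ∧ v ∈ P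

/-- Hypothesis (H2): every 5-vertex set inducing a prison in `G` contains at least
two edges with both endpoints in `S`. -/
def H2 (G : SimpleGraph V) (S : Set V) : Prop :=
  ∀ P, InducesPrison G P →
    ∃ e₁ e₂ : Sym2 V, e₁ ≠ e₂ ∧ e₁ ∈ edgesWithin G (P ∩ S) ∧ e₂ ∈ edgesWithin G (P ∩ S)

/-- `B`: the edges of `G−S` lying in no triangle of `G−S`. -/
def BSet (G : SimpleGraph V) (S : Set V) : Set (Sym2 V) :=
  {e ∈ edgesWithin G Sᶜ | ¬ ∃ w ∈ Sᶜ, ∀ x ∈ e, G.Adj w x}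

/-- `B_e` for the edge `e = ab` of `G[S]`: the edges of `B` both of whose endpoints
are adjacent in `G` to both `a` and `b`. -/
def BOf (G : SimpleGraph V) (S : Set V) (a b : V) : Set (Sym2 V) :=
  {f ∈ BSet G S | ∀ x ∈ f, G.Adj x a ∧ G.Adj x b}

/-- `V(B_e)`: the set of endpoints of the edges of `B_e`. -/
def BVerts (G : SimpleGraph V) (S : Set V) (a b : V) : Set V :=
  {x | ∃ f ∈ BOf G S a b, x ∈ f}

/-- The graph `G ∪ A` obtained by adding the pairs in `A` as edges. -/
def addEdges (G : SimpleGraph V) (A : Set (Sym2 V)) : SimpleGraph V :=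
  G ⊔ SimpleGraph.fromEdgeSet A

/-- `A` is a prison-free completion set for `G`: a set of non-edges (unordered
pairs of distinct vertices not adjacent in `G`) whose addition makes `G` prison-free. -/
def CompletionSet (G : SimpleGraph V) (A : Set (Sym2 V)) : Prop :=
  (∀ e ∈ A, ¬ e.IsDiag) ∧ (∀ e ∈ A, e ∉ G.edgeSet) ∧ PrisonFree (addEdges G A)

/-- `A` is a minimal prison-free completion set for `G`. -/
def MinCompletionSet (G : SimpleGraph V) (A : Set (Sym2 V)) : Prop :=
  CompletionSet G A ∧ ∀ A' ⊂ A, ¬ CompletionSet G A'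

/-- `A` is a solution to the instance `(G,k)` of Prison-Free Edge Completion:
a prison-free completion set of size at most `k`. -/
def Solution (G : SimpleGraph V) (k : ℕ) (A : Set (Sym2 V)) : Prop :=
  CompletionSet G A ∧ A.Finite ∧ A.ncard ≤ k

/-- `A` is a minimal solution to `(G,k)`: a solution no proper subset of which is a
prison-free completion set. -/
def MinSolution (G : SimpleGraph V) (k : ℕ) (A : Set (Sym2 V)) : Prop :=
  Solution G k A ∧ ∀ A' ⊂ A, ¬ CompletionSet G A'

/-- `K` is a set of 4 vertices inducing a complete graph `K₄` in `G`. -/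
def IsK4 (G : SimpleGraph V) (K : Set V) : Prop :=
  K.ncard = 4 ∧ ∀ u ∈ K, ∀ v ∈ K, u ≠ v → G.Adj u v

/-- The modulator property of the set `S` (output of the sunflower-based
Lemma): for every prison `P` in `G` and every edge set `A ⊆ E(G)` with `|A| ≤ k`,
if deleting `A` from `G[S]` yields a prison-free graph then `A` contains an edge
of `G[P]`. -/
def GoodModulator (G : SimpleGraph V) (k : ℕ) (S : Set V) : Prop :=
  ∀ P : Set V, InducesPrison G P →
    ∀ A : Set (Sym2 V), A ⊆ G.edgeSet → A.Finite → A.ncard ≤ k →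
      PrisonFree ((inducedOn G S).deleteEdges A) →
      ∃ e ∈ A, e ∈ edgesWithin G P

/-- Hypothesis (H3): for every `F' ∈ cmd₃(G−S)` and every inclusion-wise maximal
set `F ⊇ F'` such that `G[F]` is complete multipartite, some vertex outside `F`
has neighbours in at least two classes of `F`. -/
def H3 (G : SimpleGraph V) (S : Set V) : Prop :=
  ∀ F', Cmd G Sᶜ 3 F' → ∀ F : Set V, F' ⊆ F → CMP G F →
    (∀ F'', F ⊆ F'' → CMP G F'' → F'' = F) →
    ∃ v ∉ F, ∃ P, IsCMP G F P ∧
      ∃ C ∈ P, ∃ D ∈ P, C ≠ D ∧ (∃ x ∈ C, G.Adj v x) ∧ ∃ y ∈ D, G.Adj v y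

/-- `F` is an inclusion-wise maximal subset of `W` inducing a complete
multipartite subgraph of `G`. -/
def MaxCMPon (G : SimpleGraph V) (W F : Set V) : Prop :=
  F ⊆ W ∧ CMP G F ∧ ∀ F'', F'' ⊆ W → F ⊆ F'' → CMP G F'' → F'' = F

/-! If `x, y, z` are common neighbours of the edge `ab` outside `S` with `xz` an edge and `y`
adjacent to neither, then `{a, b, x, z, y}` induces a prison whose only edge inside `S` is `ab`,
against (H2). Hence non-adjacency is an equivalence relation on the common neighbourhood, and its
classes are the parts of a complete multipartite graph. An edge `uv` of `B_ab` lies in no triangle,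
so every common neighbour is non-adjacent to `u` or to `v`: the classes of `u` and `v` are the only ones. -/

section Multipartite

variable {G : SimpleGraph V} {F : Set V}

def NonAdjTransitiveOn (G : SimpleGraph V) (F : Set V) : Prop :=
  ∀ x ∈ F, ∀ y ∈ F, ∀ z ∈ F, ¬ G.Adj x y → ¬ G.Adj y z → ¬ G.Adj x z

def nonAdjClass (G : SimpleGraph V) (F : Set V) (u : V) : Set V := {w ∈ F | ¬ G.Adj u w}

lemma mem_nonAdjClass_self {u : V} (hu : u ∈ F) : u ∈ nonAdjClass G F u := ⟨hu, G.irrefl⟩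

lemma nonAdjClass_subset (u : V) : nonAdjClass G F u ⊆ F := fun _ hw => hw.1

lemma nonAdjClass_ne {u v : V} (hv : v ∈ F) (huv : G.Adj u v) :
    nonAdjClass G F u ≠ nonAdjClass G F v := fun h =>
  (h ▸ mem_nonAdjClass_self hv : v ∈ nonAdjClass G F u).2 huv

namespace NonAdjTransitiveOn

variable (htrans : NonAdjTransitiveOn G F)
include htrans

lemma nonAdjClass_eq {u w : V} (hu : u ∈ F) (hw : w ∈ F) (huw : ¬ G.Adj u w) :
    nonAdjClass G F u = nonAdjClass G F w := by
  ext t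
  refine ⟨fun ⟨ht, hut⟩ => ⟨ht, htrans w hw u hu t ht (fun h => huw h.symm) hut⟩,
    fun ⟨ht, hwt⟩ => ⟨ht, htrans u hu w hw t ht huw hwt⟩⟩

lemma isCMP {P : Set (Set V)} (hP : P ⊆ nonAdjClass G F '' F) (hcover : F ⊆ ⋃₀ P) :
    IsCMP G F P := by
  refine ⟨?_, (Set.sUnion_subset ?_).antisymm hcover, ?_, ?_⟩
  · intro C hC
    obtain ⟨u, hu, rfl⟩ := hP hC
    exact ⟨⟨u, mem_nonAdjClass_self hu⟩, nonAdjClass_subset u⟩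
  · intro C hC
    obtain ⟨u, -, rfl⟩ := hP hC
    exact nonAdjClass_subset u
  · rintro C hC D hD hCD
    obtain ⟨u, hu, rfl⟩ := hP hC
    obtain ⟨w, hw, rfl⟩ := hP hD
    refine Set.disjoint_left.2 fun t ⟨ht, hut⟩ ⟨_, hwt⟩ => hCD ?_
    exact htrans.nonAdjClass_eq hu hw (htrans u hu t ht w hw hut fun h => hwt h.symm)
  · refine fun u hu v hv => ⟨?_, fun hnot => not_not.1 fun hadj => ?_⟩
    · rintro hadj ⟨C, hC, huC, hvC⟩
      obtain ⟨t, ht, rfl⟩ := hP hC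
      exact htrans u hu t ht v hv (fun h => huC.2 h.symm) hvC.2 hadj
    · obtain ⟨C, hC, huC⟩ := hcover hu
      obtain ⟨t, ht, rfl⟩ := hP hC
      exact hnot ⟨_, hC, huC, hv, htrans t ht u hu v hv huC.2 hadj⟩

lemma cmp : CMP G F :=
  ⟨nonAdjClass G F '' F, htrans.isCMP subset_rfl fun _ ht =>
    ⟨_, Set.mem_image_of_mem _ ht, mem_nonAdjClass_self ht⟩⟩

lemma isCMP_pair {u v : V} (hu : u ∈ F) (hv : v ∈ F)
    (hno : ∀ w ∈ F, ¬ (G.Adj u w ∧ G.Adj v w)) :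
    IsCMP G F {nonAdjClass G F u, nonAdjClass G F v} := by
  refine htrans.isCMP (Set.insert_subset (Set.mem_image_of_mem _ hu)
    (Set.singleton_subset_iff.2 (Set.mem_image_of_mem _ hv))) fun t ht => ?_
  by_cases hut : G.Adj u t
  · exact ⟨_, Or.inr rfl, ht, fun hvt => hno t ht ⟨hut, hvt⟩⟩
  · exact ⟨_, Or.inl rfl, ht, hut⟩

end NonAdjTransitiveOn

end Multipartite

section Prison

variable {G : SimpleGraph V}

instance : DecidableRel prison.Adj := fun a b => by unfold prison; infer_instance

lemma prison_eq_of_adj_iff {i j : Fin 5} (h : ∀ k, prison.Adj i k ↔ prison.Adj j k) : i = j := by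
  revert i j; decide

lemma inducesPrison_range {g : Fin 5 → V}
    (hg : ∀ i j, G.Adj (g i) (g j) ↔ prison.Adj i j) : InducesPrison G (Set.range g) := by
  refine ⟨⟨g, fun i j hij => prison_eq_of_adj_iff fun k => ?_⟩, rfl, hg⟩
  rw [← hg, ← hg, hij]

lemma edgesWithin_subsingleton_of_subset_pair {X : Set V} {a b : V}
    (hX : X ⊆ {a, b}) : (edgesWithin G X).Subsingleton := by
  have key : ∀ e ∈ edgesWithin G X, e = s(a, b) := by
    refine Sym2.ind fun u v (he : G.Adj u v ∧ u ∈ X ∧ v ∈ X) => ?_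
    obtain ⟨huv, hu, hv⟩ := he
    rcases hX hu with rfl | rfl <;> rcases hX hv with rfl | rfl
    exacts [(G.irrefl huv).elim, rfl, Sym2.eq_swap, (G.irrefl huv).elim]
  exact fun e he f hf => (key e he).trans (key f hf).symm

lemma H2.not_inducesPrison {S P : Set V} (h2 : H2 G S) {a b : V}
    (hP : P ∩ S ⊆ {a, b}) : ¬ InducesPrison G P := fun hprison => by
  obtain ⟨e₁, e₂, hne, he₁, he₂⟩ := h2 P hprison
  exact hne (edgesWithin_subsingleton_of_subset_pair hP he₁ he₂)

end Prison

section CommonNeighbourhood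

variable {G : SimpleGraph V} {S : Set V} {a b : V}

def commonNeighborsOutside (G : SimpleGraph V) (S : Set V) (a b : V) : Set V :=
  {x | x ∉ S ∧ G.Adj a x ∧ G.Adj b x}

lemma H2.nonAdjTransitiveOn_commonNeighborsOutside (h2 : H2 G S) (hab : G.Adj a b) :
    NonAdjTransitiveOn G (commonNeighborsOutside G S a b) := by
  rintro x ⟨hxS, hax, hbx⟩ y ⟨hyS, hay, hby⟩ z ⟨hzS, haz, hbz⟩ hxy hyz hxz
  refine h2.not_inducesPrison (P := Set.range ![a, b, x, z, y]) (a := a) (b := b) ?_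
    (inducesPrison_range ?_)
  · rintro _ ⟨⟨i, rfl⟩, hiS⟩
    fin_cases i <;> simp_all
  · intro i j
    fin_cases i <;> fin_cases j <;> simp [prison, G.adj_comm, *]

lemma exists_adj_forall_not_adj_of_BOf_nonempty (hB : (BOf G S a b).Nonempty) :
    ∃ u ∈ commonNeighborsOutside G S a b, ∃ v ∈ commonNeighborsOutside G S a b, G.Adj u v ∧
      ∀ w ∈ commonNeighborsOutside G S a b, ¬ (G.Adj u w ∧ G.Adj v w) := by
  obtain ⟨e, ⟨he, hnotri⟩, hends⟩ := hB
  induction e using Sym2.ind with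
  | _ u v =>
    obtain ⟨huv, hu, hv⟩ : G.Adj u v ∧ u ∉ S ∧ v ∉ S := he
    obtain ⟨hua, hub⟩ := hends u (Sym2.mem_mk_left u v)
    obtain ⟨hva, hvb⟩ := hends v (Sym2.mem_mk_right u v)
    refine ⟨u, ⟨hu, hua.symm, hub.symm⟩, v, ⟨hv, hva.symm, hvb.symm⟩, huv, ?_⟩
    rintro w ⟨hw, -⟩ ⟨huw, hvw⟩
    exact hnotri ⟨w, hw, fun x hx => by
      rcases Sym2.mem_iff.1 hx with rfl | rfl
      exacts [huw.symm, hvw.symm]⟩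

end CommonNeighbourhood

theorem common_neighbourhood_multipartite_general {V : Type*}
    (G : SimpleGraph V) (S : Set V) (h2 : H2 G S)
    (a b : V) (hab : G.Adj a b) :
    CMP G {x : V | x ∉ S ∧ G.Adj a x ∧ G.Adj b x} ∧
    ((BOf G S a b).Nonempty →
      ∃ C₁ C₂ : Set V, C₁ ≠ C₂ ∧
        IsCMP G {x : V | x ∉ S ∧ G.Adj a x ∧ G.Adj b x} {C₁, C₂}) := by
  have htrans := h2.nonAdjTransitiveOn_commonNeighborsOutside hab
  refine ⟨htrans.cmp, fun hB => ?_⟩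
  obtain ⟨u, hu, v, hv, huv, hno⟩ := exists_adj_forall_not_adj_of_BOf_nonempty hB
  exact ⟨_, _, nonAdjClass_ne hv huv, htrans.isCMP_pair hu hv hno⟩

/-- Under (H1) and (H2), for every edge `ab` of `G[S]`, the set
`N(a) ∩ N(b) ∩ (V ∖ S)` induces a complete multipartite subgraph of `G`, and if
`B_{ab}` is nonempty, this induced subgraph is complete bipartite. -/
theorem common_neighbourhood_multipartite {V : Type*} [Fintype V]
    (G : SimpleGraph V) (S : Set V) (h1 : H1 G S) (h2 : H2 G S)
    (a b : V) (ha : a ∈ S) (hb : b ∈ S) (hab : G.Adj a b) :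
    CMP G {x : V | x ∉ S ∧ G.Adj a x ∧ G.Adj b x} ∧
    ((BOf G S a b).Nonempty →
      ∃ C₁ C₂ : Set V, C₁ ≠ C₂ ∧
        IsCMP G {x : V | x ∉ S ∧ G.Adj a x ∧ G.Adj b x} {C₁, C₂}) :=
  common_neighbourhood_multipartite_general G S h2 a b hab

end PrisonFreePaper
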